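/- arXiv:1508.05652 — 3 statements merged into one kernel-verified Lean document; each statement's English description precedes it below -/
import Mathlib

section
/- If f and h are probability density functions on ℝ that are symmetric about zero and strictly unimodal at zero (i.e., strictly decreasing on values: f(u2) < f(u1) whenever 0 < u1 < u2, and likewise for h), then their convolution f*h is strictly unimodal at zero: for any u1, u2 with 0 < u1 < u2, (f*h)(u2) < (f*h)(u1). -/
/-!
Write `u₁ = c - d`, `u₂ = c + d` with `0 < d < c` and substitute `v = c + w`. Since `h` is
even, `(f * h)(u₁) - (f * h)(u₂) = ∫ f (c + w) * (h (d + w) - h (d - w)) dw`, and pairing `w`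
with `-w` turns this into `∫_{w > 0} (f (c - w) - f (c + w)) * (h (d - w) - h (d + w)) dw`.
For `w > 0` we have `|c - w| < c + w` and `|d - w| < d + w`, so both factors are positive.
-/

open MeasureTheory Set Filter Topology

lemma StrictAntiOn.lt_apply_zero {f : ℝ → ℝ} (hf : StrictAntiOn f (Ioi 0))
    (hc : ContinuousWithinAt f (Ioi 0) 0) {x : ℝ} (hx : 0 < x) : f x < f 0 := by
  have hx2 : 0 < x / 2 := half_pos hx
  have hlt : f x < f (x / 2) := hf hx2 hx (half_lt_self hx)
  have hle : f (x / 2) ≤ f 0 := by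
    refine ge_of_tendsto hc ?_
    filter_upwards [Ioo_mem_nhdsGT hx2] with t ht
    exact hf.antitoneOn ht.1 hx2 ht.2.le
  exact hlt.trans_le hle

lemma Function.Even.apply_lt_apply_of_abs_lt_abs {f : ℝ → ℝ} (heven : Function.Even f)
    (hf : StrictAntiOn f (Ioi 0)) (hc : ContinuousAt f 0) {x y : ℝ} (hxy : |y| < |x|) :
    f x < f y := by
  have apply_abs : ∀ z, f |z| = f z := fun z => by
    rcases abs_choice z with hz | hz <;> rw [hz]
    exact heven z
  rw [← apply_abs x, ← apply_abs y]
  rcases (abs_nonneg y).eq_or_lt with hy | hy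
  · rw [← hy]
    exact hf.lt_apply_zero hc.continuousWithinAt (hy.trans_lt hxy)
  · exact hf hy (hy.trans hxy) hxy

lemma setIntegral_pos_of_forall_pos {α : Type*} [MeasurableSpace α] {μ : Measure α} {s : Set α}
    {g : α → ℝ} (hs : MeasurableSet s) (hμs : μ s ≠ 0) (hg : IntegrableOn g s μ)
    (hpos : ∀ x ∈ s, 0 < g x) : 0 < ∫ x in s, g x ∂μ := by
  have hnonneg : 0 ≤ᵐ[μ.restrict s] g := (ae_restrict_mem hs).mono fun x hx => (hpos x hx).le
  rw [setIntegral_pos_iff_support_of_nonneg_ae hnonneg hg,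
    inter_eq_right.2 fun x hx => Function.mem_support.2 (hpos x hx).ne']
  exact pos_iff_ne_zero.2 hμs

lemma integral_eq_setIntegral_Ioi_comp_neg_add {G : ℝ → ℝ} (hG : Integrable G) :
    ∫ w, G w = ∫ w in Ioi 0, (G (-w) + G w) := by
  rw [← intervalIntegral.integral_Iic_add_Ioi hG.integrableOn hG.integrableOn,
    integral_add hG.comp_neg.integrableOn hG.integrableOn, integral_comp_neg_Ioi, neg_zero]

lemma integral_pos_of_comp_neg_add_pos {G : ℝ → ℝ} (hG : Integrable G)
    (hpos : ∀ w, 0 < w → 0 < G (-w) + G w) : 0 < ∫ w, G w := by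
  rw [integral_eq_setIntegral_Ioi_comp_neg_add hG]
  exact setIntegral_pos_of_forall_pos measurableSet_Ioi (by simp)
    (hG.comp_neg.add hG).integrableOn hpos

lemma MeasureTheory.Integrable.mul_comp_sub_left {f h : ℝ → ℝ} (hf : Integrable f)
    (hh : Continuous h) {M : ℝ} (hM : ∀ x, |h x| ≤ M) (u : ℝ) :
    Integrable (fun v => f v * h (u - v)) :=
  hf.mul_bdd (hh.comp (continuous_sub_left u)).aestronglyMeasurable
    (Eventually.of_forall fun v => hM (u - v))

theorem convolution_strict_unimodal_general
    (f h : ℝ → ℝ)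
    (hf_cont : Continuous f) (hh_cont : Continuous h)
    (hh_bdd : ∃ M, ∀ x, h x ≤ M)
    (hh_nonneg : ∀ x, 0 ≤ h x)
    (hf_int : Integrable f)
    (hf_symm : ∀ x, f (-x) = f x) (hh_symm : ∀ x, h (-x) = h x)
    (hf_unimodal : ∀ u₁ u₂ : ℝ, 0 < u₁ → u₁ < u₂ → f u₂ < f u₁)
    (hh_unimodal : ∀ u₁ u₂ : ℝ, 0 < u₁ → u₁ < u₂ → h u₂ < h u₁) :
    ∀ u₁ u₂ : ℝ, 0 < u₁ → u₁ < u₂ →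
      (∫ v, f v * h (u₂ - v)) < (∫ v, f v * h (u₁ - v)) := by
  intro u₁ u₂ hu₁ hu₁₂
  obtain ⟨c, d, rfl, rfl, hd, hdc⟩ :
      ∃ c d, u₁ = c - d ∧ u₂ = c + d ∧ 0 < d ∧ d < c :=
    ⟨(u₁ + u₂) / 2, (u₂ - u₁) / 2, by ring, by ring, by linarith, by linarith⟩
  obtain ⟨M, hM⟩ := hh_bdd
  have hconv := hf_int.mul_comp_sub_left hh_cont fun x =>
    abs_le.2 ⟨by linarith [hh_nonneg x, hM x], hM x⟩
  have f_lt : ∀ {x y}, |y| < |x| → f x < f y :=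
    Function.Even.apply_lt_apply_of_abs_lt_abs hf_symm
      (fun a ha b _ hab => hf_unimodal a b ha hab) hf_cont.continuousAt
  have h_lt : ∀ {x y}, |y| < |x| → h x < h y :=
    Function.Even.apply_lt_apply_of_abs_lt_abs hh_symm
      (fun a ha b _ hab => hh_unimodal a b ha hab) hh_cont.continuousAt
  rw [← sub_pos, ← integral_sub (hconv _) (hconv _), ← integral_add_left_eq_self _ c]
  refine integral_pos_of_comp_neg_add_pos (((hconv _).sub (hconv _)).comp_add_left c)
    fun w hw => ?_
  have hw_abs : ∀ {a}, 0 < a → |a - w| < |a + w| := fun {a} ha => by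
    rw [abs_of_pos (by linarith : 0 < a + w), abs_sub_lt_iff]; constructor <;> linarith
  have folded : f (c + -w) * h (c - d - (c + -w)) - f (c + -w) * h (c + d - (c + -w)) +
      (f (c + w) * h (c - d - (c + w)) - f (c + w) * h (c + d - (c + w))) =
      (f (c - w) - f (c + w)) * (h (d - w) - h (d + w)) := by
    rw [show c - d - (c + -w) = -(d - w) by ring, show c + d - (c + -w) = d + w by ring,
      show c - d - (c + w) = -(d + w) by ring, show c + d - (c + w) = d - w by ring,
      hh_symm, hh_symm, ← sub_eq_add_neg]
    ring
  rw [folded]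
  exact mul_pos (sub_pos.2 (f_lt (hw_abs (hd.trans hdc)))) (sub_pos.2 (h_lt (hw_abs hd)))

/-- The convolution of two symmetric, strictly unimodal (at zero) probability
densities is strictly unimodal at zero. -/
theorem convolution_strict_unimodal
    (f h : ℝ → ℝ)
    (hf_cont : Continuous f) (hh_cont : Continuous h)
    (hf_bdd : ∃ M, ∀ x, f x ≤ M) (hh_bdd : ∃ M, ∀ x, h x ≤ M)
    (hf_nonneg : ∀ x, 0 ≤ f x) (hh_nonneg : ∀ x, 0 ≤ h x)
    (hf_int : Integrable f) (hh_int : Integrable h)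
    (hf_one : ∫ x, f x = 1) (hh_one : ∫ x, h x = 1)
    (hf_symm : ∀ x, f (-x) = f x) (hh_symm : ∀ x, h (-x) = h x)
    (hf_unimodal : ∀ u₁ u₂ : ℝ, 0 < u₁ → u₁ < u₂ → f u₂ < f u₁)
    (hh_unimodal : ∀ u₁ u₂ : ℝ, 0 < u₁ → u₁ < u₂ → h u₂ < h u₁) :
    ∀ u₁ u₂ : ℝ, 0 < u₁ → u₁ < u₂ →
      (∫ v, f v * h (u₂ - v)) < (∫ v, f v * h (u₁ - v)) :=
  convolution_strict_unimodal_general f h hf_cont hh_cont hh_bdd hh_nonneg hf_int hf_symm hh_symm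
    hf_unimodal hh_unimodal
end

section
/- Let m be continuous on [0,∞) with finite level sets on compact intervals, and g, g0 continuous strictly increasing on [c,d] with g(α) = g0(α) for some α. If g(s) < g0(s) for some s > α, then the functions u ↦ m(g(u)) and u ↦ m(g0(u)) cannot coincide on [α, s]. -/
open Set

/-- If `g(s) < g0(s)` for some `s > α` at which the transformations disagree, the
functions `m ∘ g` and `m ∘ g0` cannot coincide on `[α, s]`. -/
theorem cannot_coincide
    (m g g0 : ℝ → ℝ) (c d α s : ℝ)
    (hm_cont : ContinuousOn m (Ici 0))
    (hm_level : ∀ p q y : ℝ, 0 ≤ p → ({t | t ∈ Icc p q ∧ m t = y}).Finite)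
    (hg_cont : ContinuousOn g (Icc c d)) (hg0_cont : ContinuousOn g0 (Icc c d))
    (hg_mono : StrictMonoOn g (Icc c d)) (hg0_mono : StrictMonoOn g0 (Icc c d))
    (hg_maps : ∀ u ∈ Icc c d, g u ∈ Ici (0 : ℝ))
    (hg0_maps : ∀ u ∈ Icc c d, g0 u ∈ Ici (0 : ℝ))
    (hα : α ∈ Icc c d) (hs : s ∈ Icc c d) (hαs : α < s)
    (hagree : g α = g0 α) (hlt : g s < g0 s) :
    ¬ (∀ u ∈ Icc α s, m (g u) = m (g0 u)) := by
  intro h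
  have hsub : Icc α s ⊆ Icc c d := Icc_subset_Icc hα.1 hs.2
  -- key step: descend
  have step : ∀ u, u ∈ Icc α s → g u < g0 u →
      ∃ v, (v ∈ Icc α s ∧ g v < g0 v) ∧ v < u ∧ g0 v = g u := by
    intro u hu hlt'
    have hαu : α ≤ u := hu.1
    have hucd : u ∈ Icc c d := hsub hu
    have hcont : ContinuousOn g0 (Icc α u) :=
      hg0_cont.mono (Icc_subset_Icc hα.1 hucd.2)
    have h1 : g0 α ≤ g u := by
      rw [← hagree]
      exact (hg_mono.monotoneOn) hα hucd hαu
    obtain ⟨v, hv, hgv⟩ := intermediate_value_Icc hαu hcont ⟨h1, hlt'.le⟩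
    have hvu : v < u := by
      rcases lt_or_eq_of_le hv.2 with h' | h'
      · exact h'
      · rw [h'] at hgv; exact absurd hgv (ne_of_gt hlt')
    have hvmem : v ∈ Icc α s := ⟨hv.1, hvu.le.trans hu.2⟩
    have hgvlt : g v < g0 v := by
      rw [hgv]
      exact hg_mono (hsub hvmem) hucd hvu
    exact ⟨v, ⟨hvmem, hgvlt⟩, hvu, hgv⟩
  -- build the descending sequence by iteration
  let T := {x : ℝ // x ∈ Icc α s ∧ g x < g0 x}
  have step' : ∀ u : T, ∃ v : T, v.1 < u.1 ∧ g0 v.1 = g u.1 := by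
    intro ⟨u, hu1, hu2⟩
    obtain ⟨v, hv, hvu, hgv⟩ := step u hu1 hu2
    exact ⟨⟨v, hv⟩, hvu, hgv⟩
  choose F hFlt hFeq using step'
  let s0 : T := ⟨s, ⟨hαs.le, le_rfl⟩, hlt⟩
  let seq : ℕ → T := fun n => F^[n] s0
  have hseq_succ : ∀ n, seq (n + 1) = F (seq n) := by
    intro n; simp only [seq, Function.iterate_succ_apply']
  have hanti : StrictAnti (fun n => (seq n).1) :=
    strictAnti_nat_of_succ_lt (fun n => by rw [hseq_succ]; exact hFlt (seq n))
  have hval : ∀ n, m (g (seq n).1) = m (g s) := by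
    intro n
    induction n with
    | zero => rfl
    | succ n ih =>
      have h1 : m (g (seq (n + 1)).1) = m (g0 (seq (n + 1)).1) :=
        h _ (seq (n + 1)).2.1
      rw [h1, hseq_succ, hFeq (seq n), ih]
  -- the points g (seq n) are distinct members of a finite set
  have hinj : Function.Injective (fun n => g (seq n).1) := by
    intro a b hab
    exact hanti.injective
      (hg_mono.injOn (hsub (seq a).2.1) (hsub (seq b).2.1) hab)
  have hmem : ∀ n, g (seq n).1 ∈ {t | t ∈ Icc (g α) (g s) ∧ m t = m (g s)} := by
    intro n
    refine ⟨⟨?_, ?_⟩, hval n⟩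
    · exact hg_mono.monotoneOn hα (hsub (seq n).2.1) (seq n).2.1.1
    · exact hg_mono.monotoneOn (hsub (seq n).2.1) hs (seq n).2.1.2
  exact (Set.infinite_of_injective_forall_mem hinj hmem)
    (hm_level (g α) (g s) (m (g s)) (hg_maps α hα))
end

section
/- With L as above, if L(g) = L(g0) = F(0) for some admissible g, then m(g(y)) = m(g0(y)) for (Lebesgue-)all y with f1(g(y)) f2(y) > 0, assuming all functions involved are continuous. -/
open MeasureTheory Set

/-- If the limiting alignment functional attains its maximal value `F(0)`, then
`m ∘ g = m ∘ g0` wherever the weight `f₁(g(y)) f₂(y)` is positive. -/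
theorem alignment_functional_eq_implies
    (f₁ f₂ : ℝ → ℝ) (m g g0 : ℝ → ℝ) (F : ℝ → ℝ)
    (hF_cont : Continuous F)
    (hF_symm : ∀ u, F (-u) = F u)
    (hF_uni : ∀ u : ℝ, u ≠ 0 → F u < F 0)
    (hf₁_cont : Continuous f₁) (hf₂_cont : Continuous f₂)
    (hf₁_nonneg : ∀ x, 0 ≤ f₁ x) (hf₂_nonneg : ∀ x, 0 ≤ f₂ x)
    (hf₁_int : Integrable f₁) (hf₂_int : Integrable f₂)
    (hf₁_one : ∫ x, f₁ x = 1) (hf₂_one : ∫ x, f₂ x = 1)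
    (hm_cont : Continuous m) (hg_cont : Continuous g) (hg0_cont : Continuous g0)
    (hw_int : IntegrableOn (fun y => f₁ (g y) * f₂ y) (Ici (0 : ℝ)))
    (hwF_int : IntegrableOn
      (fun y => f₁ (g y) * f₂ y * F (m (g y) - m (g0 y))) (Ici (0 : ℝ)))
    (hden_pos : 0 < ∫ y in Ici (0 : ℝ), f₁ (g y) * f₂ y)
    (heq : (∫ y in Ici (0 : ℝ), f₁ (g y) * f₂ y * F (m (g y) - m (g0 y))) /
      (∫ y in Ici (0 : ℝ), f₁ (g y) * f₂ y) = F 0) :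
    ∀ y ∈ Ici (0 : ℝ), 0 < f₁ (g y) * f₂ y → m (g y) = m (g0 y) := by
  -- the defect function
  set h : ℝ → ℝ := fun y => f₁ (g y) * f₂ y * (F 0 - F (m (g y) - m (g0 y))) with hh
  have hF_le : ∀ u : ℝ, F u ≤ F 0 := by
    intro u
    rcases eq_or_ne u 0 with rfl | hu
    · exact le_refl _
    · exact (hF_uni u hu).le
  have h_nonneg : ∀ y, 0 ≤ h y := fun y =>
    mul_nonneg (mul_nonneg (hf₁_nonneg _) (hf₂_nonneg _)) (sub_nonneg.2 (hF_le _))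
  have h_cont : Continuous h := by
    apply Continuous.mul
    · exact (hf₁_cont.comp hg_cont).mul hf₂_cont
    · exact continuous_const.sub (hF_cont.comp ((hm_cont.comp hg_cont).sub (hm_cont.comp hg0_cont)))
  have h_int : IntegrableOn h (Ici (0 : ℝ)) := by
    have := (hw_int.const_mul (F 0)).sub hwF_int
    exact this.congr (ae_of_all _ fun y => by simp only [Pi.sub_apply, hh]; ring)
  have h_num : (∫ y in Ici (0 : ℝ), f₁ (g y) * f₂ y * F (m (g y) - m (g0 y))) =
      F 0 * ∫ y in Ici (0 : ℝ), f₁ (g y) * f₂ y := by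
    field_simp at heq
    linarith [heq]
  have h_int_zero : (∫ y in Ici (0 : ℝ), h y) = 0 := by
    have : (∫ y in Ici (0 : ℝ), h y) =
        (∫ y in Ici (0 : ℝ), (F 0 * (f₁ (g y) * f₂ y) - f₁ (g y) * f₂ y * F (m (g y) - m (g0 y)))) := by
      apply setIntegral_congr_fun measurableSet_Ici
      intro y _; simp only [hh]; ring
    rw [this, integral_sub (hw_int.const_mul (F 0)) hwF_int, integral_const_mul, h_num, sub_self]
  have h_ae : h =ᵐ[volume.restrict (Ici (0 : ℝ))] 0 := by
    refine (integral_eq_zero_iff_of_nonneg (fun y => h_nonneg y) h_int).mp h_int_zero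
  have h_eqOn : EqOn h 0 (Ici (0 : ℝ)) := by
    refine Measure.eqOn_of_ae_eq h_ae h_cont.continuousOn continuousOn_const ?_
    rw [interior_Ici, closure_Ioi]
  intro y hy hw
  have h0 : h y = 0 := h_eqOn hy
  have : F 0 - F (m (g y) - m (g0 y)) = 0 := by
    rcases mul_eq_zero.mp h0 with h1 | h2
    · exact absurd h1 (ne_of_gt hw)
    · exact h2
  by_contra hne
  have : m (g y) - m (g0 y) ≠ 0 := sub_ne_zero.2 hne
  exact absurd ‹F 0 - F (m (g y) - m (g0 y)) = 0› (ne_of_gt (sub_pos.2 (hF_uni _ this)))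
end
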